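/- Every element of G can be written as a product P·N of a positive word and a negative word without increasing length: for every element w of the free group F on the three letters a12, a23, a13, there exist finite lists p and n of letters such that π(w) = (the product in G of the generators listed in p)·(the product in G of the inverses of the generators listed in n) and length(p) + length(n) ≤ the length of the reduced word of w. -/
import Mathlib


/-- The band relations `a23·a12 = a13·a23` and `a13·a23 = a12·a13`, where the
generators are indexed by `0 ↦ a12`, `1 ↦ a23`, `2 ↦ a13`. -/
def Grels : Set (FreeGroup (Fin 3)) :=
  {FreeGroup.of 1 * FreeGroup.of 0 * (FreeGroup.of 2 * FreeGroup.of 1)⁻¹,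
   FreeGroup.of 2 * FreeGroup.of 1 * (FreeGroup.of 0 * FreeGroup.of 2)⁻¹}

/-- The band-generator presentation of the 3-strand braid group. -/
abbrev G3 : Type := PresentedGroup Grels

/-- The band generator `a12`. -/
def a12 : G3 := PresentedGroup.of 0

/-- The band generator `a23`. -/
def a23 : G3 := PresentedGroup.of 1

/-- The band generator `a13`. -/
def a13 : G3 := PresentedGroup.of 2

lemma mk_rel_one {r : FreeGroup (Fin 3)} (h : r ∈ Grels) :
    PresentedGroup.mk Grels r = 1 :=
  (QuotientGroup.eq_one_iff r).mpr (Subgroup.subset_normalClosure h)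

lemma rel1 : (PresentedGroup.of 1 : G3) * PresentedGroup.of 0 =
    PresentedGroup.of 2 * PresentedGroup.of 1 := by
  have h := mk_rel_one (Set.mem_insert _ _)
  rw [map_mul, map_mul, map_inv, map_mul] at h
  have := mul_eq_one_iff_eq_inv.mp h
  simpa [PresentedGroup.of] using this

lemma rel2 : (PresentedGroup.of 2 : G3) * PresentedGroup.of 1 =
    PresentedGroup.of 0 * PresentedGroup.of 2 := by
  have h := mk_rel_one (Set.mem_insert_of_mem _ rfl)
  rw [map_mul, map_mul, map_inv, map_mul] at h
  have := mul_eq_one_iff_eq_inv.mp h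
  simpa [PresentedGroup.of] using this

lemma rel3 : (PresentedGroup.of 1 : G3) * PresentedGroup.of 0 =
    PresentedGroup.of 0 * PresentedGroup.of 2 := rel1.trans rel2

lemma aux_swap {H : Type*} [Group H] {x y u v : H} (h : x * y = u * v) :
    x⁻¹ * u = y * v⁻¹ := by
  rw [inv_mul_eq_iff_eq_mul, ← mul_assoc, h, mul_assoc, mul_inv_cancel, mul_one]

/-- Left reversing: `aᵢ⁻¹ · aⱼ` can be rewritten as `aⱼ' · aᵢ'⁻¹`. -/
lemma swap (i j : Fin 3) (h : i ≠ j) :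
    ∃ j' i' : Fin 3, ((PresentedGroup.of i : G3))⁻¹ * PresentedGroup.of j =
      PresentedGroup.of j' * ((PresentedGroup.of i' : G3))⁻¹ := by
  fin_cases i <;> fin_cases j <;> simp_all
  · exact ⟨2, 0, aux_swap rel3.symm⟩
  · exact ⟨2, 1, aux_swap rel2.symm⟩
  · exact ⟨0, 2, aux_swap rel3⟩
  · exact ⟨0, 1, aux_swap rel1⟩
  · exact ⟨1, 2, aux_swap rel2⟩
  · exact ⟨1, 0, aux_swap rel1.symm⟩

/-- Pushing a single inverse generator through a positive word. -/
lemma negpos (p : List (Fin 3)) (i : Fin 3) :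
    ∃ p' n' : List (Fin 3),
      ((PresentedGroup.of i : G3))⁻¹ * (p.map fun k => (PresentedGroup.of k : G3)).prod =
        (p'.map fun k => (PresentedGroup.of k : G3)).prod *
        (n'.map fun k => ((PresentedGroup.of k : G3))⁻¹).prod ∧
      p'.length + n'.length ≤ p.length + 1 := by
  induction p generalizing i with
  | nil => exact ⟨[], [i], by simp⟩
  | cons j p ih =>
    by_cases hij : i = j
    · subst hij
      exact ⟨p, [], by simp [← mul_assoc], by simp only [List.length_cons, List.length_nil]; omega⟩
    · obtain ⟨j', i', hs⟩ := swap i j hij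
      obtain ⟨p'', n'', he, hl⟩ := ih i'
      refine ⟨j' :: p'', n'', ?_, by simp only [List.length_cons]; omega⟩
      calc ((PresentedGroup.of i : G3))⁻¹ *
            ((j :: p).map fun k => (PresentedGroup.of k : G3)).prod
          = (((PresentedGroup.of i : G3))⁻¹ * PresentedGroup.of j) *
            (p.map fun k => (PresentedGroup.of k : G3)).prod := by simp [mul_assoc]
        _ = PresentedGroup.of j' * (((PresentedGroup.of i' : G3))⁻¹ *
            (p.map fun k => (PresentedGroup.of k : G3)).prod) := by rw [hs, mul_assoc]
        _ = _ := by rw [he]; simp [mul_assoc]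

lemma list_form (L : List (Fin 3 × Bool)) :
    ∃ p n : List (Fin 3),
      PresentedGroup.mk Grels (FreeGroup.mk L) =
        (p.map fun k => (PresentedGroup.of k : G3)).prod *
        (n.map fun k => ((PresentedGroup.of k : G3))⁻¹).prod ∧
      p.length + n.length ≤ L.length := by
  induction L with
  | nil =>
    refine ⟨[], [], ?_, by simp⟩
    have : FreeGroup.mk ([] : List (Fin 3 × Bool)) = 1 := rfl
    simp [this]
  | cons x L ih =>
    obtain ⟨i, b⟩ := x
    obtain ⟨p, n, he, hl⟩ := ih
    have hsplit : FreeGroup.mk ((i, b) :: L) = FreeGroup.mk [(i, b)] * FreeGroup.mk L := by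
      rw [FreeGroup.mul_mk]; rfl
    cases b with
    | true =>
      refine ⟨i :: p, n, ?_, by simp only [List.length_cons]; omega⟩
      have h1 : FreeGroup.mk [(i, true)] = FreeGroup.of i := rfl
      rw [hsplit, map_mul, h1, he]
      change PresentedGroup.of i * _ = _
      simp [mul_assoc]
    | false =>
      have h1 : FreeGroup.mk [(i, false)] = (FreeGroup.of i)⁻¹ := by
        rw [show FreeGroup.of i = FreeGroup.mk [(i, true)] from rfl, FreeGroup.inv_mk]; rfl
      obtain ⟨p', n', he', hl'⟩ := negpos p i
      refine ⟨p', n' ++ n, ?_, ?_⟩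
      · rw [hsplit, map_mul, h1, map_inv, he, ← mul_assoc]
        have : (PresentedGroup.mk Grels (FreeGroup.of i))⁻¹ *
            (p.map fun k => (PresentedGroup.of k : G3)).prod =
            (p'.map fun k => (PresentedGroup.of k : G3)).prod *
            (n'.map fun k => ((PresentedGroup.of k : G3))⁻¹).prod := he'
        rw [this]
        simp [mul_assoc]
      · simp only [List.length_append, List.length_cons]
        omega

theorem positive_negative_normal_form (w : FreeGroup (Fin 3)) :
    ∃ p n : List (Fin 3),
      PresentedGroup.mk Grels w =
        (p.map fun i => (PresentedGroup.of i : G3)).prod *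
        (n.map fun i => ((PresentedGroup.of i : G3))⁻¹).prod ∧
      p.length + n.length ≤ w.norm := by
  obtain ⟨p, n, he, hl⟩ := list_form w.toWord
  rw [FreeGroup.mk_toWord] at he
  exact ⟨p, n, he, hl⟩
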